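/- arXiv:1703.09599 — 3 statements merged into one kernel-verified Lean document; each statement's English description precedes it below -/
import Mathlib

section
/- Let G be a group with elements s_0, s_1, ..., s_{n-1} (n ≥ 3) satisfying the braid relations of type B_n (i.e. s_0 s_1 s_0 s_1 = s_1 s_0 s_1 s_0, s_i s_{i+1} s_i = s_{i+1} s_i s_{i+1} for 1 ≤ i ≤ n-2, and s_i s_j = s_j s_i for |i-j| > 1) together with the relation s_0^2 = 1. Define t_0 = s_0 s_1 s_0 and t_i = s_i for 1 ≤ i ≤ n-1. Then t_0, ..., t_{n-1} satisfy the braid relations of type D_n: t_0 t_1 = t_1 t_0, t_0 t_2 t_0 = t_2 t_0 t_2, t_i t_{i+1} t_i = t_{i+1} t_i t_{i+1} for 1 ≤ i ≤ n-2, and t_i t_j = t_j t_i whenever |i-j| > 1 and {i,j} ≠ {0,2}. -/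
/-- If elements `s 0, ..., s (n-1)` of a group satisfy the braid relations of type `Bₙ`
together with `(s 0)^2 = 1`, then `t 0 = s 0 * s 1 * s 0`, `t i = s i` satisfy the braid
relations of type `Dₙ`. -/
theorem braid_relations_Dn_of_Bn {G : Type*} [Group G] (n : ℕ) (hn : 3 ≤ n)
    (s : ℕ → G)
    (hB4 : s 0 * s 1 * s 0 * s 1 = s 1 * s 0 * s 1 * s 0)
    (hB3 : ∀ i, 1 ≤ i → i + 1 ≤ n - 1 → s i * s (i + 1) * s i = s (i + 1) * s i * s (i + 1))
    (hB2 : ∀ i j, i < n → j < n → i + 1 < j → s i * s j = s j * s i)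
    (hs0 : s 0 ^ 2 = 1)
    (t : ℕ → G)
    (ht0 : t 0 = s 0 * s 1 * s 0)
    (hti : ∀ i, 1 ≤ i → i ≤ n - 1 → t i = s i) :
    t 0 * t 1 = t 1 * t 0 ∧
    t 0 * t 2 * t 0 = t 2 * t 0 * t 2 ∧
    (∀ i, 1 ≤ i → i + 1 ≤ n - 1 → t i * t (i + 1) * t i = t (i + 1) * t i * t (i + 1)) ∧
    (∀ i j, i < n → j < n → i + 1 < j → ¬(i = 0 ∧ j = 2) → t i * t j = t j * t i) := by

  have h00 : s 0 * s 0 = 1 := by rw [← sq]; exact hs0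
  have h00' : ∀ x : G, s 0 * (s 0 * x) = x := fun x => by
    rw [← mul_assoc, h00, one_mul]
  have h02 : s 0 * s 2 = s 2 * s 0 := hB2 0 2 (by omega) (by omega) (by omega)
  have h02' : ∀ x : G, s 0 * (s 2 * x) = s 2 * (s 0 * x) := fun x => by
    rw [← mul_assoc, h02, mul_assoc]
  have h121 : s 1 * s 2 * s 1 = s 2 * s 1 * s 2 := hB3 1 le_rfl (by omega)
  have h121' : ∀ x : G, s 1 * (s 2 * (s 1 * x)) = s 2 * (s 1 * (s 2 * x)) := fun x => by
    rw [← mul_assoc, ← mul_assoc, h121, mul_assoc, mul_assoc]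
  have ht1 : t 1 = s 1 := hti 1 le_rfl (by omega)
  have ht2 : t 2 = s 2 := hti 2 (by omega) (by omega)
  refine ⟨?_, ?_, ?_, ?_⟩
  · rw [ht0, ht1]
    have := hB4
    calc s 0 * s 1 * s 0 * s 1 = s 1 * s 0 * s 1 * s 0 := hB4
      _ = s 1 * (s 0 * s 1 * s 0) := by group
  · rw [ht0, ht2]
    have : s 0 * s 1 * s 0 * s 2 * (s 0 * s 1 * s 0) * 1
        = s 2 * (s 0 * s 1 * s 0) * s 2 * 1 := by
      simp only [mul_assoc, mul_one]
      rw [h02', h00', h121', h02', h02]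
    simpa using this
  · intro i hi hin
    rw [hti i hi (by omega), hti (i+1) (by omega) hin]
    exact hB3 i hi hin
  · intro i j hiN hjN hij hne
    rcases Nat.eq_zero_or_pos i with rfl | hi
    · have hj3 : 3 ≤ j := by omega
      rw [ht0, hti j (by omega) (by omega)]
      have h0j : s 0 * s j = s j * s 0 := hB2 0 j (by omega) hjN (by omega)
      have h1j : s 1 * s j = s j * s 1 := hB2 1 j (by omega) hjN (by omega)
      have h0j' : ∀ x : G, s 0 * (s j * x) = s j * (s 0 * x) := fun x => by
        rw [← mul_assoc, h0j, mul_assoc]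
      have h1j' : ∀ x : G, s 1 * (s j * x) = s j * (s 1 * x) := fun x => by
        rw [← mul_assoc, h1j, mul_assoc]
      have : s 0 * s 1 * s 0 * s j * 1 = s j * (s 0 * s 1 * s 0) * 1 := by
        simp only [mul_assoc, mul_one]
        rw [show s 0 * (s 1 * (s 0 * s j)) = s 0 * (s 1 * (s 0 * (s j * 1))) by rw [mul_one],
          h0j', h1j', h0j', mul_one]
      simpa using this
    · rw [hti i hi (by omega), hti j (by omega) (by omega)]
      exact hB2 i j hiN hjN hij
end

section
/- Let G be a group generated by elements s_0, s_1, ..., s_{n-1} satisfying the braid relations of type B_n and s_0^2 = 1, and let U be the subgroup generated by t_0 = s_0 s_1 s_0 and t_i = s_i for 1 ≤ i ≤ n-1. Then conjugation by s_0 maps U to itself: s_0 t_0 s_0 = t_1, s_0 t_1 s_0 = t_0, and s_0 t_i s_0 = t_i for all i ≥ 2. In particular s_0 normalizes U and G = U ∪ U s_0, so U has index at most 2 in G. -/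
/-!
Conjugation by the involution `s 0` permutes the generators of `U`: it swaps `t 0` and `t 1`
and fixes the `t i = s i` with `i ≥ 2`, which commute with `s 0`. Hence `s 0` normalizes `U`,
and since `U` contains every `s i` with `i ≥ 1`, `G = U ⊔ ⟨s 0⟩ = U ∪ U * s 0`.
-/

namespace Subgroup

variable {G : Type*} [Group G]

theorem mem_normalizer_of_sq_eq_one {S : Set G} {a : G} (ha : a ^ 2 = 1)
    (hS : ∀ x ∈ S, a * x * a ∈ S) : a ∈ normalizer S := by
  have ha_inv : a⁻¹ = a := inv_eq_of_mul_eq_one_right (by rwa [← sq])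
  have hS' : ∀ x ∈ S, a⁻¹ * x * a⁻¹⁻¹ ∈ S := by simpa only [ha_inv] using hS
  refine fun x => ⟨fun hx => ?_, fun hx => ?_⟩
  · simpa only [ha_inv] using hS x hx
  · simpa [mul_assoc] using hS' _ hx

theorem mem_or_exists_eq_mul_of_sup_zpowers_eq_top {H : Subgroup G} {a : G} (ha : a ^ 2 = 1)
    (haH : a ∈ normalizer (H : Set G)) (htop : H ⊔ zpowers a = ⊤) (g : G) :
    g ∈ H ∨ ∃ h ∈ H, g = h * a := by
  have hg : g ∈ ((H ⊔ zpowers a : Subgroup G) : Set G) := htop ▸ mem_top g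
  rw [coe_mul_of_right_le_normalizer_left H _ (zpowers_le.2 haH)] at hg
  obtain ⟨h, hh : h ∈ H, _, ⟨k, rfl⟩, rfl⟩ := hg
  dsimp only
  rw [zpow_eq_zpow_emod' k ha]
  rcases Int.emod_two_eq_zero_or_one k with hk | hk
  · exact Or.inl (by simpa [hk] using hh)
  · exact Or.inr ⟨h, hh, by simp [hk]⟩

theorem index_le_two_of_forall_mem_or_exists_eq_mul {H : Subgroup G} (a : G)
    (hcover : ∀ g, g ∈ H ∨ ∃ h ∈ H, g = h * a) : H.index ≤ 2 := by
  have hsurj : Function.Surjective (![(1 : G), a⁻¹] · : Fin 2 → G ⧸ H) := by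
    refine QuotientGroup.mk_surjective.forall.2 fun g => ?_
    -- `G ⧸ H` is the space of left cosets, so the right-coset cover is applied to `g⁻¹`.
    rcases hcover g⁻¹ with hg | ⟨h, hh, hg⟩
    · exact ⟨0, QuotientGroup.eq.2 (by simpa using hg)⟩
    · exact ⟨1, QuotientGroup.eq.2 (by rw [← inv_inv g, hg]; simpa using hh)⟩
  simpa [index] using Nat.card_le_card_of_surjective _ hsurj

end Subgroup

theorem subgroup_index_two_of_Bn_quotient_general {G : Type*} [Group G] (n : ℕ) (hn : 3 ≤ n)
    (s : ℕ → G)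
    (hB2 : ∀ i j, i < n → j < n → i + 1 < j → s i * s j = s j * s i)
    (hs0 : s 0 ^ 2 = 1)
    (hgen : Subgroup.closure (s '' {i | i < n}) = (⊤ : Subgroup G))
    (t : ℕ → G)
    (ht0 : t 0 = s 0 * s 1 * s 0)
    (hti : ∀ i, 1 ≤ i → i ≤ n - 1 → t i = s i)
    (U : Subgroup G)
    (hU : U = Subgroup.closure (t '' {i | i < n})) :
    s 0 * t 0 * s 0 = t 1 ∧
    s 0 * t 1 * s 0 = t 0 ∧
    (∀ i, 2 ≤ i → i < n → s 0 * t i * s 0 = t i) ∧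
    s 0 ∈ Subgroup.normalizer (U : Set G) ∧
    (∀ g : G, g ∈ U ∨ ∃ u ∈ U, g = u * s 0) ∧
    U.index ≤ 2 := by
  have hs0_mul : s 0 * s 0 = 1 := by rw [← sq, hs0]
  have ht1 : t 1 = s 1 := hti 1 le_rfl (by omega)
  have hconj0 : s 0 * t 0 * s 0 = t 1 := by
    rw [ht0, ht1, show s 0 * (s 0 * s 1 * s 0) * s 0 = s 0 * s 0 * s 1 * (s 0 * s 0) by group,
      hs0_mul, one_mul, mul_one]
  have hconj1 : s 0 * t 1 * s 0 = t 0 := by rw [ht0, ht1]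
  have hconj : ∀ i, 2 ≤ i → i < n → s 0 * t i * s 0 = t i := fun i hi hin => by
    rw [hti i (by omega) (by omega), hB2 0 i (by omega) hin (by omega), mul_assoc, hs0_mul,
      mul_one]
  have hnorm : s 0 ∈ Subgroup.normalizer (U : Set G) := by
    rw [hU]
    refine Subgroup.normalizer_le_normalizer_closure _ (Subgroup.mem_normalizer_of_sq_eq_one hs0 ?_)
    rintro _ ⟨i, hi : i < n, rfl⟩
    obtain rfl | rfl | hi2 : i = 0 ∨ i = 1 ∨ 2 ≤ i := by omega
    · exact ⟨1, show 1 < n by omega, hconj0.symm⟩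
    · exact ⟨0, show 0 < n by omega, hconj1.symm⟩
    · exact ⟨i, hi, (hconj i hi2 hi).symm⟩
  have htop : U ⊔ Subgroup.zpowers (s 0) = ⊤ := by
    rw [eq_top_iff, ← hgen, Subgroup.closure_le]
    rintro _ ⟨i, hi : i < n, rfl⟩
    rcases Nat.eq_zero_or_pos i with rfl | hi0
    · exact Subgroup.mem_sup_right (Subgroup.mem_zpowers _)
    · rw [← hti i hi0 (by omega), hU]
      exact Subgroup.mem_sup_left (Subgroup.subset_closure ⟨i, hi, rfl⟩)
  have hcover := Subgroup.mem_or_exists_eq_mul_of_sup_zpowers_eq_top hs0 hnorm htop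
  exact ⟨hconj0, hconj1, hconj, hnorm, hcover,
    Subgroup.index_le_two_of_forall_mem_or_exists_eq_mul _ hcover⟩

/-- Let `G` be generated by `s 0, ..., s (n-1)` satisfying the braid relations of type `Bₙ`
and `(s 0)^2 = 1`, and let `U` be the subgroup generated by `t 0 = s 0 * s 1 * s 0`,
`t i = s i` (`1 ≤ i ≤ n-1`).  Then conjugation by `s 0` swaps `t 0` and `t 1` and fixes the
other `t i`; in particular `s 0` normalizes `U`, every element of `G` lies in `U ∪ U * s 0`,
and `U` has index at most 2. -/
theorem subgroup_index_two_of_Bn_quotient {G : Type*} [Group G] (n : ℕ) (hn : 3 ≤ n)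
    (s : ℕ → G)
    (hB4 : s 0 * s 1 * s 0 * s 1 = s 1 * s 0 * s 1 * s 0)
    (hB3 : ∀ i, 1 ≤ i → i + 1 ≤ n - 1 → s i * s (i + 1) * s i = s (i + 1) * s i * s (i + 1))
    (hB2 : ∀ i j, i < n → j < n → i + 1 < j → s i * s j = s j * s i)
    (hs0 : s 0 ^ 2 = 1)
    (hgen : Subgroup.closure (s '' {i | i < n}) = (⊤ : Subgroup G))
    (t : ℕ → G)
    (ht0 : t 0 = s 0 * s 1 * s 0)
    (hti : ∀ i, 1 ≤ i → i ≤ n - 1 → t i = s i)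
    (U : Subgroup G)
    (hU : U = Subgroup.closure (t '' {i | i < n})) :
    s 0 * t 0 * s 0 = t 1 ∧
    s 0 * t 1 * s 0 = t 0 ∧
    (∀ i, 2 ≤ i → i < n → s 0 * t i * s 0 = t i) ∧
    s 0 ∈ Subgroup.normalizer (U : Set G) ∧
    (∀ g : G, g ∈ U ∨ ∃ u ∈ U, g = u * s 0) ∧
    U.index ≤ 2 :=
  subgroup_index_two_of_Bn_quotient_general n hn s hB2 hs0 hgen t ht0 hti U hU
end

section
/- Let x ∈ W_{D_n} ⊆ W_{B_n} and suppose t_0 is the unique left descent of x in W_{D_n}, where x = t_0 x' with ℓ_{D}(x') = ℓ_{D}(x) − 1. If s_0 is a left descent of x' in W_{B_n}, then s_1 is not a left descent of s_0 x' in W_{B_n}; consequently ℓ_{B}(s_0 s_1 s_0 x') = ℓ_{B}(s_0 x') + 2. -/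
/-!
Model `W_{Bₙ}` as signed permutations of `ℤ`. For `g` in `W_{Bₙ}` (resp. `W_{Dₙ}`) the word length
is an inversion count of `w = g⁻¹`: each generator changes the count by one, and every `w ≠ 1`
has a generator lowering it. Multiplying `g` on the left by `s₀`, `sₖ` or `t₀` raises the count
exactly when `0 < w 1`, `w k < w (k + 1)`, or `0 < w 1 + w 2` respectively.

For `w = x'⁻¹`, the `t₀`-descent of `x = t₀ x'` gives `0 < w 1 + w 2` and the `s₀`-descent of
`x'` gives `w 1 < 0`. Then `w s₀` has entries `-w 1 < w 2` in positions `1, 2`, an ascent for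
`s₁`, and `w s₀ s₁` has `w 2 > 0` in position `1`, an ascent for `s₀`.
-/

/-- The group of signed permutations: permutations `w` of `ℤ` with `w (-i) = - w i`
which move only `{-n, …, -1, 1, …, n}`. -/
def signedPermGroup (n : ℕ) : Subgroup (Equiv.Perm ℤ) where
  carrier := {w | (∀ i : ℤ, w (-i) = -(w i)) ∧ ∀ i : ℤ, (n : ℤ) < |i| → w i = i}
  one_mem' := by constructor <;> intro i <;> simp
  mul_mem' := by
    rintro a b ⟨ha1, ha2⟩ ⟨hb1, hb2⟩
    refine ⟨fun i => ?_, fun i hi => ?_⟩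
    · simp [Equiv.Perm.mul_apply, hb1, ha1]
    · have h1 : b i = i := hb2 i hi
      simp [Equiv.Perm.mul_apply, h1, ha2 i hi]
  inv_mem' := by
    rintro a ⟨ha1, ha2⟩
    refine ⟨fun i => ?_, fun i hi => ?_⟩
    · apply a.injective
      rw [show ∀ j, a (a⁻¹ j) = j from a.apply_symm_apply, ha1, show ∀ j, a (a⁻¹ j) = j from a.apply_symm_apply]
    · apply a.injective
      rw [show ∀ j, a (a⁻¹ j) = j from a.apply_symm_apply, ha2 i hi]

/-- The standard Coxeter generators of type `Bₙ` as signed permutations: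
`s 0 = (-1, 1)` and `s i = (i, i+1)(-i, -i-1)`. -/
def sgen : ℕ → Equiv.Perm ℤ := fun i =>
  if i = 0 then Equiv.swap (-1 : ℤ) 1
  else Equiv.swap (i : ℤ) ((i : ℤ) + 1) * Equiv.swap (-(i : ℤ)) (-((i : ℤ) + 1))

/-- The standard Coxeter generators of type `Dₙ`:  `t 0 = s 0 * s 1 * s 0`, `t i = s i`. -/
def tgen : ℕ → Equiv.Perm ℤ := fun i =>
  if i = 0 then sgen 0 * sgen 1 * sgen 0 else sgen i

/-- Word length of `g` with respect to a generating set `S` (the Coxeter length function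
when `S` is the simple system of a Coxeter group). -/
noncomputable def wordLength {G : Type*} [Group G] (S : Set G) (g : G) : ℕ :=
  sInf {k | ∃ l : List G, (∀ x ∈ l, x ∈ S) ∧ l.length = k ∧ l.prod = g}

/-- Number of `i ∈ {1, …, n}` with `w i < 0`. -/
noncomputable def negCount (n : ℕ) (w : Equiv.Perm ℤ) : ℕ :=
  ((Finset.Icc (1 : ℤ) (n : ℤ)).filter (fun i => w i < 0)).card

section WordLength

variable {G : Type*} [Group G] {S : Set G}

theorem wordLength_le_length {l : List G} (hl : ∀ x ∈ l, x ∈ S) :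
    wordLength S l.prod ≤ l.length :=
  Nat.sInf_le ⟨l, hl, rfl, rfl⟩

theorem exists_length_eq_wordLength {l : List G} (hl : ∀ x ∈ l, x ∈ S) :
    ∃ l' : List G, (∀ x ∈ l', x ∈ S) ∧ l'.length = wordLength S l.prod ∧ l'.prod = l.prod := by
  have h : {m | ∃ l' : List G, (∀ x ∈ l', x ∈ S) ∧ l'.length = m ∧ l'.prod = l.prod}.Nonempty :=
    ⟨_, l, hl, rfl, rfl⟩
  exact Nat.sInf_mem h

theorem wordLength_eq_of_descent (f : G → ℕ) (hone : f 1 = 0)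
    (hstep : ∀ s ∈ S, ∀ g ∈ Subgroup.closure S, f (s * g) ≤ f g + 1)
    (hdesc : ∀ g ∈ Subgroup.closure S, g ≠ 1 → ∃ s ∈ S, ∃ h, g = s * h ∧ f h < f g)
    {g : G} (hg : g ∈ Subgroup.closure S) : wordLength S g = f g := by
  have lower : ∀ l : List G, (∀ x ∈ l, x ∈ S) → f l.prod ≤ l.length := by
    intro l hl
    induction l with
    | nil => simp [hone]
    | cons s l ih =>
      simp only [List.mem_cons, forall_eq_or_imp] at hl
      have hmem : l.prod ∈ Subgroup.closure S :=
        list_prod_mem fun x hx => Subgroup.subset_closure (hl.2 x hx)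
      have := hstep s hl.1 l.prod hmem
      have := ih hl.2
      rw [List.prod_cons, List.length_cons]
      omega
  have upper : ∀ m, ∀ g ∈ Subgroup.closure S, f g = m →
      ∃ l : List G, (∀ x ∈ l, x ∈ S) ∧ l.length ≤ m ∧ l.prod = g := by
    intro m
    induction m using Nat.strong_induction_on with
    | _ m ih =>
      rintro g hg rfl
      by_cases h1 : g = 1
      · exact ⟨[], by simp, by simp, by simp [h1]⟩
      obtain ⟨s, hs, h, rfl, hlt⟩ := hdesc g hg h1
      have hh : h ∈ Subgroup.closure S := by
        simpa using mul_mem (inv_mem (Subgroup.subset_closure hs)) hg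
      obtain ⟨l, hl, hlen, rfl⟩ := ih _ hlt h hh rfl
      refine ⟨s :: l, ?_, ?_, rfl⟩
      · simpa [hs] using hl
      · simp only [List.length_cons]
        omega
  obtain ⟨l, hl, hlen, rfl⟩ := upper _ g hg rfl
  obtain ⟨l₀, hl₀, hlen₀, hprod₀⟩ := exists_length_eq_wordLength hl
  have := wordLength_le_length hl
  have := lower l₀ hl₀
  rw [hprod₀] at this
  omega

end WordLength

namespace SignedPerm

open Finset

variable {n k : ℕ} {w : Equiv.Perm ℤ}

lemma sgen_zero_apply (i : ℤ) : sgen 0 i = if i = -1 then 1 else if i = 1 then -1 else i := by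
  simp only [sgen, reduceIte, Equiv.swap_apply_def]

lemma sgen_apply (hk : k ≠ 0) (i : ℤ) :
    sgen k i = if i = k then (k : ℤ) + 1 else if i = (k : ℤ) + 1 then (k : ℤ)
      else if i = -(k : ℤ) then -((k : ℤ) + 1) else if i = -((k : ℤ) + 1) then -(k : ℤ) else i := by
  have : (1 : ℤ) ≤ k := by omega
  simp only [sgen, if_neg hk, Equiv.Perm.mul_apply, Equiv.swap_apply_def]
  split_ifs <;> first | contradiction | omega

lemma sgen_sgen (k : ℕ) (i : ℤ) : sgen k (sgen k i) = i := by
  rcases eq_or_ne k 0 with rfl | hk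
  · simp only [sgen_zero_apply]; split_ifs <;> first | contradiction | omega
  · simp only [sgen_apply hk]; split_ifs <;> first | contradiction | omega

lemma sgen_mul_self (k : ℕ) : sgen k * sgen k = 1 :=
  Equiv.ext (sgen_sgen k)

lemma inv_sgen (k : ℕ) : (sgen k)⁻¹ = sgen k :=
  inv_eq_of_mul_eq_one_right (sgen_mul_self k)

lemma tgen_zero : tgen 0 = sgen 0 * sgen 1 * sgen 0 := rfl

lemma tgen_of_ne_zero (hk : k ≠ 0) : tgen k = sgen k := if_neg hk

lemma inv_tgen (k : ℕ) : (tgen k)⁻¹ = tgen k := by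
  rcases eq_or_ne k 0 with rfl | hk
  · simp only [tgen_zero, mul_inv_rev, inv_sgen, mul_assoc]
  · rw [tgen_of_ne_zero hk, inv_sgen]

lemma tgen_mul_self (k : ℕ) : tgen k * tgen k = 1 := by
  nth_rw 1 [← inv_tgen k]
  exact inv_mul_cancel _

lemma sgen_mem (hk : k < n) : sgen k ∈ signedPermGroup n := by
  suffices ∀ i, sgen k (-i) = -sgen k i ∧ ((n : ℤ) < |i| → sgen k i = i) from
    ⟨fun i => (this i).1, fun i => (this i).2⟩
  intro i
  rw [lt_abs]
  rcases eq_or_ne k 0 with rfl | hk0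
  · simp only [sgen_zero_apply]; split_ifs <;> first | contradiction | omega
  · simp only [sgen_apply hk0]; split_ifs <;> first | contradiction | omega

lemma closure_sgen_le : Subgroup.closure (sgen '' {i | i < n}) ≤ signedPermGroup n :=
  (Subgroup.closure_le _).2 <| by rintro _ ⟨k, hk, rfl⟩; exact sgen_mem hk

lemma sgen_mem_closure (hk : k < n) : sgen k ∈ Subgroup.closure (sgen '' {i | i < n}) :=
  Subgroup.subset_closure ⟨k, hk, rfl⟩

lemma tgen_mem_closure (hk : k < n) : tgen k ∈ Subgroup.closure (tgen '' {i | i < n}) :=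
  Subgroup.subset_closure ⟨k, hk, rfl⟩

lemma closure_tgen_le_closure_sgen (hn : 2 ≤ n) :
    Subgroup.closure (tgen '' {i | i < n}) ≤ Subgroup.closure (sgen '' {i | i < n}) := by
  refine (Subgroup.closure_le _).2 ?_
  rintro _ ⟨k, hk, rfl⟩
  rcases eq_or_ne k 0 with rfl | hk0
  · exact mul_mem (mul_mem (sgen_mem_closure hk) (sgen_mem_closure (by omega)))
      (sgen_mem_closure hk)
  · rw [SetLike.mem_coe, tgen_of_ne_zero hk0]
    exact sgen_mem_closure hk

lemma closure_tgen_le (hn : 2 ≤ n) :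
    Subgroup.closure (tgen '' {i | i < n}) ≤ signedPermGroup n :=
  (closure_tgen_le_closure_sgen hn).trans closure_sgen_le

lemma apply_neg (hw : w ∈ signedPermGroup n) (i : ℤ) : w (-i) = -w i := hw.1 i

lemma apply_zero (hw : w ∈ signedPermGroup n) : w 0 = 0 := by
  have := apply_neg hw 0
  rw [neg_zero] at this
  omega

lemma abs_apply_le (hw : w ∈ signedPermGroup n) {i : ℤ} (hi : |i| ≤ n) : |w i| ≤ n := by
  by_contra! h
  have := ((signedPermGroup n).inv_mem hw).2 (w i) h
  rw [show w⁻¹ (w i) = i from w.symm_apply_apply i] at this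
  rw [← this] at h
  omega

lemma eq_one_of_forall_apply_natCast (hw : w ∈ signedPermGroup n)
    (h : ∀ i : ℕ, i ≤ n → w i = i) : w = 1 := by
  ext i
  rw [Equiv.Perm.one_apply]
  by_cases hi : (n : ℤ) < |i|
  · exact hw.2 i hi
  rcases le_total 0 i with hi0 | hi0
  · lift i to ℕ using hi0
    exact h i (by rw [abs_of_nonneg (by omega)] at hi; omega)
  · obtain ⟨j, rfl⟩ : ∃ j : ℕ, i = -j := ⟨i.natAbs, by omega⟩
    rw [apply_neg hw, h j (by rw [abs_neg, Nat.abs_cast] at hi; omega)]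

lemma apply_ne_apply_succ (w : Equiv.Perm ℤ) (k : ℕ) : w k ≠ w (k + 1) :=
  w.injective.ne (by omega)

lemma apply_one_ne_zero (hw : w ∈ signedPermGroup n) : w 1 ≠ 0 := fun h =>
  apply_ne_apply_succ w 0 (by simp [apply_zero hw, h])

lemma sub_le_sub_of_forall_lt_succ {f : ℤ → ℤ} {i j : ℕ} (hij : i ≤ j)
    (hf : ∀ k : ℕ, i ≤ k → k < j → f k < f (k + 1)) : (j : ℤ) - i ≤ f j - f i := by
  induction j, hij using Nat.le_induction with
  | base => simp
  | succ j hij ih =>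
    have h1 := hf j hij (by omega)
    have h2 := ih fun k hk hkj => hf k hk (by omega)
    push_cast
    omega

/-- On `{0, …, n}`, with `w 0 = 0` and `|w n| ≤ n`, the only strictly increasing choice is the
identity. -/
lemma eq_one_of_forall_lt_succ (hw : w ∈ signedPermGroup n)
    (h : ∀ k : ℕ, k < n → w k < w (k + 1)) : w = 1 := by
  refine eq_one_of_forall_apply_natCast hw fun i hi => ?_
  have hlow := sub_le_sub_of_forall_lt_succ (Nat.zero_le i) fun k _ hk => h k (by omega)
  have hup := sub_le_sub_of_forall_lt_succ hi fun k _ hk => h k hk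
  have hn := abs_le.1 (abs_apply_le hw (i := n) (by simp))
  simp only [Nat.cast_zero, apply_zero hw] at hlow
  omega

lemma sgen_apply_self (hk : k ≠ 0) : sgen k k = k + 1 := by
  simp [sgen_apply hk]

lemma sgen_apply_succ (hk : k ≠ 0) : sgen k (k + 1) = k := by
  simp [sgen_apply hk]

lemma sgen_one_apply_one : sgen 1 1 = 2 := by
  simpa using sgen_apply_self (k := 1) one_ne_zero

lemma sgen_mem_Icc_iff (hk : k ≠ 0) (hkn : k < n) {i : ℤ} :
    sgen k i ∈ Icc (1 : ℤ) n ↔ i ∈ Icc (1 : ℤ) n := by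
  simp only [mem_Icc, sgen_apply hk]
  split_ifs <;> first | contradiction | omega

lemma sgen_lt_sgen_iff (hk : k ≠ 0) {i j : ℤ} (hi : 1 ≤ i) (hj : 1 ≤ j)
    (hij : ¬(i = k ∧ j = k + 1)) (hji : ¬(i = k + 1 ∧ j = k)) :
    sgen k i < sgen k j ↔ i < j := by
  simp only [sgen_apply hk]
  split_ifs <;> first | contradiction | omega

lemma mul_sgen_zero_apply_one (hw : w ∈ signedPermGroup n) : (w * sgen 0) 1 = -w 1 := by
  simp [sgen_zero_apply, ← apply_neg hw]

lemma mul_sgen_zero_apply_of_two_le {i : ℤ} (hi : 2 ≤ i) : (w * sgen 0) i = w i := by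
  rw [Equiv.Perm.mul_apply, sgen_zero_apply, if_neg (by omega), if_neg (by omega)]

def pairInv (a b : ℤ) : ℕ := (if b < a then 1 else 0) + (if a + b < 0 then 1 else 0)

/-- The type `D` inversion number `inv(w) + nsp(w)` of Björner–Brenti, Ch. 8; the type `B` one
below adds `neg(w) = negCount n w`. -/
noncomputable def invD (n : ℕ) (w : Equiv.Perm ℤ) : ℕ :=
  ∑ p ∈ Icc (1 : ℤ) n ×ˢ Icc (1 : ℤ) n, if p.1 < p.2 then pairInv (w p.1) (w p.2) else 0

noncomputable def invB (n : ℕ) (w : Equiv.Perm ℤ) : ℕ := invD n w + negCount n w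

lemma pairInv_neg_left (a b : ℤ) : pairInv (-a) b = pairInv a b := by
  unfold pairInv
  split_ifs <;> first | contradiction | omega

lemma pairInv_swap_of_lt {a b : ℤ} (h : a < b) : pairInv b a = pairInv a b + 1 := by
  unfold pairInv
  split_ifs <;> first | contradiction | omega

lemma pairInv_eq_zero_iff {a b : ℤ} : pairInv a b = 0 ↔ a ≤ b ∧ 0 ≤ a + b := by
  unfold pairInv
  split_ifs <;> simp <;> omega

lemma invD_one : invD n 1 = 0 := by
  refine sum_eq_zero fun p hp => ite_eq_right_iff.2 fun hlt => ?_
  simp only [mem_product, mem_Icc] at hp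
  rw [Equiv.Perm.one_apply, Equiv.Perm.one_apply, pairInv_eq_zero_iff]
  omega

lemma negCount_one : negCount n 1 = 0 := by
  refine card_eq_zero.2 (filter_eq_empty_iff.2 fun i hi => ?_)
  simp only [mem_Icc] at hi
  simp only [Equiv.Perm.one_apply]
  omega

lemma invB_one : invB n 1 = 0 := by
  rw [invB, invD_one, negCount_one]

lemma invD_mul_sgen_zero (hw : w ∈ signedPermGroup n) : invD n (w * sgen 0) = invD n w := by
  refine sum_congr rfl fun p hp => ?_
  simp only [mem_product, mem_Icc] at hp
  split_ifs with hlt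
  · rw [mul_sgen_zero_apply_of_two_le (by omega : 2 ≤ p.2)]
    rcases eq_or_ne p.1 1 with h1 | h1
    · rw [h1, mul_sgen_zero_apply_one hw, pairInv_neg_left]
    · rw [mul_sgen_zero_apply_of_two_le (by omega : 2 ≤ p.1)]
  · rfl

/-- Only the pair of positions `(k, k + 1)` changes its relative order under `sgen k`. -/
lemma invD_mul_sgen (hk : k ≠ 0) (hkn : k < n) (w : Equiv.Perm ℤ) :
    invD n (w * sgen k) + pairInv (w k) (w (k + 1)) =
      invD n w + pairInv (w (k + 1)) (w k) := by
  set P := Icc (1 : ℤ) n ×ˢ Icc (1 : ℤ) n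
  set T : Finset (ℤ × ℤ) := {((k : ℤ), (k : ℤ) + 1), ((k : ℤ) + 1, (k : ℤ))}
  have hreindex : invD n (w * sgen k) =
      ∑ p ∈ P, if sgen k p.1 < sgen k p.2 then pairInv (w p.1) (w p.2) else 0 :=
    sum_equiv ((sgen k).prodCongr (sgen k)) (by simp [P, sgen_mem_Icc_iff hk hkn])
      (by simp [sgen_sgen])
  have hTP : T ⊆ P := by
    intro p hp
    simp only [T, mem_insert, mem_singleton] at hp
    rcases hp with rfl | rfl <;> simp only [P, mem_product, mem_Icc] <;> omega
  have hoff : ∀ p ∈ P \ T,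
      (if sgen k p.1 < sgen k p.2 then pairInv (w p.1) (w p.2) else 0) =
        if p.1 < p.2 then pairInv (w p.1) (w p.2) else 0 := by
    intro p hp
    simp only [P, T, mem_sdiff, mem_product, mem_Icc, mem_insert, mem_singleton,
      Prod.ext_iff] at hp
    simp only [sgen_lt_sgen_iff hk (by omega : 1 ≤ p.1) (by omega : 1 ≤ p.2) (by tauto) (by tauto)]
  have hpair : ((k : ℤ), (k : ℤ) + 1) ≠ ((k : ℤ) + 1, (k : ℤ)) := by simp [Prod.ext_iff]
  rw [hreindex, invD, ← sum_sdiff hTP, sum_congr rfl hoff, ← sum_sdiff hTP (s₁ := T)]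
  simp only [T, sum_pair hpair, sgen_apply_self hk, sgen_apply_succ hk, lt_add_one,
    not_lt.2 (le_add_of_nonneg_right zero_le_one), if_true, if_false]
  omega

lemma negCount_mul_sgen (hk : k ≠ 0) (hkn : k < n) (w : Equiv.Perm ℤ) :
    negCount n (w * sgen k) = negCount n w :=
  card_equiv (sgen k) fun i => by
    rw [mem_filter, mem_filter, sgen_mem_Icc_iff hk hkn, Equiv.Perm.mul_apply]

lemma negCount_mul_sgen_zero_of_pos (hw : w ∈ signedPermGroup n) (hn : 0 < n) (h : 0 < w 1) :
    negCount n (w * sgen 0) = negCount n w + 1 := by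
  have hfilter : (Icc (1 : ℤ) n).filter (fun i => (w * sgen 0) i < 0) =
      insert 1 ((Icc (1 : ℤ) n).filter (fun i => w i < 0)) := by
    ext i
    simp only [mem_filter, mem_insert, mem_Icc]
    rcases eq_or_ne i 1 with rfl | hi1
    · rw [mul_sgen_zero_apply_one hw]
      omega
    · by_cases hi2 : 2 ≤ i
      · rw [mul_sgen_zero_apply_of_two_le hi2]
        omega
      · omega
  rw [negCount, negCount, hfilter, card_insert_of_notMem (by simp; omega)]

lemma mul_sgen_apply_lt_iff (hw : w ∈ signedPermGroup n) :
    (w * sgen k) k < (w * sgen k) (k + 1) ↔ w (k + 1) < w k := by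
  rcases eq_or_ne k 0 with rfl | hk0
  · have h0 : (w * sgen 0) 0 = 0 := by simp [sgen_zero_apply, apply_zero hw]
    simp only [Nat.cast_zero, zero_add, h0, mul_sgen_zero_apply_one hw, apply_zero hw]
    omega
  · simp [sgen_apply_self hk0, sgen_apply_succ hk0]

lemma invB_mul_sgen_of_lt (hw : w ∈ signedPermGroup n) (hk : k < n) (h : w k < w (k + 1)) :
    invB n (w * sgen k) = invB n w + 1 := by
  rcases eq_or_ne k 0 with rfl | hk0
  · simp only [Nat.cast_zero, zero_add, apply_zero hw] at h
    rw [invB, invB, invD_mul_sgen_zero hw, negCount_mul_sgen_zero_of_pos hw hk h, add_assoc]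
  · have := invD_mul_sgen hk0 hk w
    rw [pairInv_swap_of_lt h] at this
    rw [invB, invB, negCount_mul_sgen hk0 hk]
    omega

lemma invB_mul_sgen_of_gt (hw : w ∈ signedPermGroup n) (hk : k < n) (h : w (k + 1) < w k) :
    invB n (w * sgen k) + 1 = invB n w := by
  have := invB_mul_sgen_of_lt (mul_mem hw (sgen_mem hk)) hk ((mul_sgen_apply_lt_iff hw).2 h)
  rwa [mul_assoc, sgen_mul_self, mul_one, eq_comm] at this

lemma invB_mul_sgen_le (hw : w ∈ signedPermGroup n) (hk : k < n) :
    invB n (w * sgen k) ≤ invB n w + 1 := by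
  rcases lt_or_gt_of_ne (apply_ne_apply_succ w k) with h | h
  · exact (invB_mul_sgen_of_lt hw hk h).le
  · have := invB_mul_sgen_of_gt hw hk h
    omega

lemma exists_invB_mul_sgen_lt (hw : w ∈ signedPermGroup n) (h1 : w ≠ 1) :
    ∃ k < n, invB n (w * sgen k) < invB n w := by
  by_contra! hasc
  refine h1 (eq_one_of_forall_lt_succ hw fun k hk => ?_)
  refine (lt_or_gt_of_ne (apply_ne_apply_succ w k)).resolve_right fun hgt => ?_
  have := invB_mul_sgen_of_gt hw hk hgt
  have := hasc k hk
  omega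

theorem wordLength_sgen {g : Equiv.Perm ℤ} (hg : g ∈ Subgroup.closure (sgen '' {i | i < n})) :
    wordLength (sgen '' {i | i < n}) g = invB n g⁻¹ := by
  refine wordLength_eq_of_descent (fun g => invB n g⁻¹) (by simp [invB_one]) ?_ ?_ hg
  · rintro _ ⟨k, hk, rfl⟩ g hg
    simp only [mul_inv_rev, inv_sgen]
    exact invB_mul_sgen_le (closure_sgen_le (inv_mem hg)) hk
  · intro g hg h1
    obtain ⟨k, hk, hlt⟩ := exists_invB_mul_sgen_lt (closure_sgen_le (inv_mem hg)) (inv_ne_one.2 h1)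
    refine ⟨sgen k, ⟨k, hk, rfl⟩, sgen k * g, by rw [← mul_assoc, sgen_mul_self, one_mul], ?_⟩
    simpa only [mul_inv_rev, inv_sgen] using hlt

theorem wordLength_sgen_mul_of_lt {g : Equiv.Perm ℤ}
    (hg : g ∈ Subgroup.closure (sgen '' {i | i < n})) (hk : k < n) (h : g⁻¹ k < g⁻¹ (k + 1)) :
    wordLength (sgen '' {i | i < n}) (sgen k * g) = wordLength (sgen '' {i | i < n}) g + 1 := by
  rw [wordLength_sgen (mul_mem (sgen_mem_closure hk) hg), wordLength_sgen hg,
    mul_inv_rev, inv_sgen]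
  exact invB_mul_sgen_of_lt (closure_sgen_le (inv_mem hg)) hk h

theorem wordLength_sgen_zero_mul_of_pos (hn : 0 < n) {g : Equiv.Perm ℤ}
    (hg : g ∈ Subgroup.closure (sgen '' {i | i < n})) (h : 0 < g⁻¹ 1) :
    wordLength (sgen '' {i | i < n}) (sgen 0 * g) = wordLength (sgen '' {i | i < n}) g + 1 :=
  wordLength_sgen_mul_of_lt hg hn (by
    rwa [Nat.cast_zero, zero_add, apply_zero (closure_sgen_le (inv_mem hg))])

lemma tgen_zero_apply_one : tgen 0 1 = -2 := by
  simp [tgen_zero, sgen_zero_apply, sgen_apply]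

lemma tgen_zero_apply_two : tgen 0 2 = -1 := by
  simp [tgen_zero, sgen_zero_apply, sgen_apply]

lemma apply_one_add_apply_two_ne_zero (hw : w ∈ signedPermGroup n) : w 1 + w 2 ≠ 0 := by
  have : w 1 ≠ w (-2) := w.injective.ne (by norm_num)
  rw [apply_neg hw] at this
  omega

lemma invD_mul_tgen_zero_of_pos (hw : w ∈ signedPermGroup n) (hn : 2 ≤ n)
    (h : 0 < w 1 + w 2) : invD n (w * tgen 0) = invD n w + 1 := by
  have hu : w * sgen 0 * sgen 1 ∈ signedPermGroup n :=
    mul_mem (mul_mem hw (sgen_mem (by omega))) (sgen_mem (by omega))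
  have := invD_mul_sgen one_ne_zero (by omega : 1 < n) (w * sgen 0)
  rw [Nat.cast_one, one_add_one_eq_two, mul_sgen_zero_apply_one hw,
    mul_sgen_zero_apply_of_two_le le_rfl, pairInv_swap_of_lt (show -w 1 < w 2 by omega),
    invD_mul_sgen_zero hw]
    at this
  rw [tgen_zero, ← mul_assoc, ← mul_assoc, invD_mul_sgen_zero hu]
  omega

lemma invD_mul_tgen_zero_of_neg (hw : w ∈ signedPermGroup n) (hn : 2 ≤ n)
    (h : w 1 + w 2 < 0) : invD n (w * tgen 0) + 1 = invD n w := by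
  have hu : w * tgen 0 ∈ signedPermGroup n :=
    mul_mem hw (closure_tgen_le hn (tgen_mem_closure (by omega)))
  have := invD_mul_tgen_zero_of_pos hu hn (by
    simp only [Equiv.Perm.mul_apply, tgen_zero_apply_one, tgen_zero_apply_two, apply_neg hw]
    omega)
  rwa [mul_assoc, tgen_mul_self, mul_one, eq_comm] at this

lemma invD_mul_tgen_le (hw : w ∈ signedPermGroup n) (hn : 2 ≤ n) (hk : k < n) :
    invD n (w * tgen k) ≤ invD n w + 1 := by
  rcases eq_or_ne k 0 with rfl | hk0
  · rcases lt_or_gt_of_ne (apply_one_add_apply_two_ne_zero hw) with h | h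
    · have := invD_mul_tgen_zero_of_neg hw hn h
      omega
    · exact (invD_mul_tgen_zero_of_pos hw hn h).le
  · have := invD_mul_sgen hk0 hk w
    rw [tgen_of_ne_zero hk0]
    rcases lt_or_gt_of_ne (apply_ne_apply_succ w k) with h | h <;>
      rw [pairInv_swap_of_lt h] at this <;> omega

lemma even_negCount_mul_sgen_zero_iff (hw : w ∈ signedPermGroup n) (hn : 0 < n) :
    Even (negCount n (w * sgen 0)) ↔ ¬Even (negCount n w) := by
  rcases lt_or_gt_of_ne (apply_one_ne_zero hw) with h | h
  · have := negCount_mul_sgen_zero_of_pos (mul_mem hw (sgen_mem hn)) hn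
      (by rw [mul_sgen_zero_apply_one hw]; omega)
    rw [mul_assoc, sgen_mul_self, mul_one] at this
    rw [this, Nat.even_add_one, not_not]
  · rw [negCount_mul_sgen_zero_of_pos hw hn h, Nat.even_add_one]

lemma even_negCount_mul_tgen_iff (hw : w ∈ signedPermGroup n) (hn : 2 ≤ n) (hk : k < n) :
    Even (negCount n (w * tgen k)) ↔ Even (negCount n w) := by
  rcases eq_or_ne k 0 with rfl | hk0
  · have hu : w * sgen 0 * sgen 1 ∈ signedPermGroup n :=
      mul_mem (mul_mem hw (sgen_mem (by omega))) (sgen_mem (by omega))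
    rw [tgen_zero, ← mul_assoc, ← mul_assoc, even_negCount_mul_sgen_zero_iff hu (by omega),
      negCount_mul_sgen one_ne_zero (by omega), even_negCount_mul_sgen_zero_iff hw (by omega),
      not_not]
  · rw [tgen_of_ne_zero hk0, negCount_mul_sgen hk0 hk]

lemma even_negCount_of_mem_closure_tgen (hn : 2 ≤ n)
    (hw : w ∈ Subgroup.closure (tgen '' {i | i < n})) : Even (negCount n w) := by
  induction hw using Subgroup.closure_induction_right with
  | one => simp [negCount_one]
  | mul_right u hu t ht ih =>
    obtain ⟨k, hk, rfl⟩ := ht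
    exact (even_negCount_mul_tgen_iff (closure_tgen_le hn hu) hn hk).2 ih
  | mul_inv_cancel u hu t ht ih =>
    obtain ⟨k, hk, rfl⟩ := ht
    rw [inv_tgen]
    exact (even_negCount_mul_tgen_iff (closure_tgen_le hn hu) hn hk).2 ih

/-- If `w` increases on `{1, …, n}` and `w 1 + w 2 > 0`, then `w 1` is the only possible
negative value, which parity excludes. -/
lemma apply_one_pos (hw : w ∈ signedPermGroup n) (hn : 0 < n) (heven : Even (negCount n w))
    (hadj : ∀ k : ℕ, 1 ≤ k → k < n → w k < w (k + 1)) (h12 : 0 < w 1 + w 2) : 0 < w 1 := by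
  have hw1 := apply_one_ne_zero hw
  by_contra! hneg
  have hpos : ∀ i : ℕ, 2 ≤ i → i ≤ n → 0 < w i := fun i hi hin => by
    have := sub_le_sub_of_forall_lt_succ hi fun k hk hki => hadj k (by omega) (by omega)
    push_cast at this
    omega
  have hfilter : (Icc (1 : ℤ) n).filter (fun i => w i < 0) = {1} := by
    ext i
    simp only [mem_filter, mem_Icc, mem_singleton]
    constructor
    · rintro ⟨⟨hi1, hin⟩, hi⟩
      by_contra hi1'
      lift i to ℕ using (by omega)
      have := hpos i (by omega) (by omega)
      omega
    · rintro rfl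
      omega
  rw [negCount, hfilter, card_singleton] at heven
  exact Nat.not_even_one heven

lemma exists_invD_mul_tgen_lt (hw : w ∈ signedPermGroup n) (hn : 2 ≤ n)
    (heven : Even (negCount n w)) (h1 : w ≠ 1) : ∃ k < n, invD n (w * tgen k) < invD n w := by
  by_contra! hasc
  have hadj : ∀ k : ℕ, 1 ≤ k → k < n → w k < w (k + 1) := fun k hk hkn =>
    (lt_or_gt_of_ne (apply_ne_apply_succ w k)).resolve_right fun hgt => by
      have := invD_mul_sgen (by omega) hkn w
      rw [pairInv_swap_of_lt hgt] at this
      have := hasc k hkn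
      rw [tgen_of_ne_zero (by omega)] at this
      omega
  have h12 : 0 < w 1 + w 2 :=
    (lt_or_gt_of_ne (apply_one_add_apply_two_ne_zero hw)).resolve_left fun hneg => by
      have := invD_mul_tgen_zero_of_neg hw hn hneg
      have := hasc 0 (by omega)
      omega
  have hw1 := apply_one_pos hw (by omega) heven hadj h12
  refine h1 (eq_one_of_forall_lt_succ hw fun k hk => ?_)
  rcases k with _ | k
  · simpa [apply_zero hw] using hw1
  · exact hadj (k + 1) (by omega) hk

theorem wordLength_tgen (hn : 2 ≤ n) {g : Equiv.Perm ℤ}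
    (hg : g ∈ Subgroup.closure (tgen '' {i | i < n})) :
    wordLength (tgen '' {i | i < n}) g = invD n g⁻¹ := by
  refine wordLength_eq_of_descent (fun g => invD n g⁻¹) (by simp [invD_one]) ?_ ?_ hg
  · rintro _ ⟨k, hk, rfl⟩ g hg
    simp only [mul_inv_rev, inv_tgen]
    exact invD_mul_tgen_le (closure_tgen_le hn (inv_mem hg)) hn hk
  · intro g hg h1
    obtain ⟨k, hk, hlt⟩ := exists_invD_mul_tgen_lt (closure_tgen_le hn (inv_mem hg)) hn
      (even_negCount_of_mem_closure_tgen hn (inv_mem hg)) (inv_ne_one.2 h1)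
    refine ⟨tgen k, ⟨k, hk, rfl⟩, tgen k * g, by rw [← mul_assoc, tgen_mul_self, one_mul], ?_⟩
    simpa only [mul_inv_rev, inv_tgen] using hlt

theorem wordLength_tgen_zero_mul_of_neg (hn : 2 ≤ n) {g : Equiv.Perm ℤ}
    (hg : g ∈ Subgroup.closure (tgen '' {i | i < n})) (h : g⁻¹ 1 + g⁻¹ 2 < 0) :
    wordLength (tgen '' {i | i < n}) (tgen 0 * g) + 1 = wordLength (tgen '' {i | i < n}) g := by
  rw [wordLength_tgen hn (mul_mem (tgen_mem_closure (by omega)) hg), wordLength_tgen hn hg,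
    mul_inv_rev, inv_tgen]
  exact invD_mul_tgen_zero_of_neg (closure_tgen_le hn (inv_mem hg)) hn h

end SignedPerm

open SignedPerm in
theorem lift_length_of_unique_t0_descent_general (n : ℕ) (hn : 2 ≤ n)
    (x x' : Equiv.Perm ℤ)
    (hx : x ∈ Subgroup.closure (tgen '' {i | i < n}))
    (hxx' : x = tgen 0 * x')
    (huniq : ∀ i < n,
      (wordLength (tgen '' {i | i < n}) (tgen i * x) < wordLength (tgen '' {i | i < n}) x ↔
        i = 0))
    (hs0 : wordLength (sgen '' {i | i < n}) (sgen 0 * x') <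
      wordLength (sgen '' {i | i < n}) x') :
    ¬ (wordLength (sgen '' {i | i < n}) (sgen 1 * (sgen 0 * x')) <
        wordLength (sgen '' {i | i < n}) (sgen 0 * x')) ∧
    wordLength (sgen '' {i | i < n}) (sgen 0 * sgen 1 * sgen 0 * x') =
      wordLength (sgen '' {i | i < n}) (sgen 0 * x') + 2 := by
  have ht0x : tgen 0 * x = x' := by rw [hxx', ← mul_assoc, tgen_mul_self, one_mul]
  have hx'D : x' ∈ Subgroup.closure (tgen '' {i | i < n}) :=
    ht0x ▸ mul_mem (tgen_mem_closure (by omega)) hx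
  have hx'B := closure_tgen_le_closure_sgen hn hx'D
  have hw := closure_sgen_le (inv_mem hx'B)
  have hw12 : 0 < x'⁻¹ 1 + x'⁻¹ 2 := by
    have hdesc := (huniq 0 (by omega)).2 rfl
    rw [ht0x, hxx'] at hdesc
    refine (lt_or_gt_of_ne (apply_one_add_apply_two_ne_zero hw)).resolve_left fun hneg => ?_
    have := wordLength_tgen_zero_mul_of_neg hn hx'D hneg
    omega
  have hw1 : x'⁻¹ 1 < 0 := by
    refine (lt_or_gt_of_ne (apply_one_ne_zero hw)).resolve_right fun hpos => ?_
    have := wordLength_sgen_zero_mul_of_pos (by omega) hx'B hpos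
    omega
  have hs0x' : sgen 0 * x' ∈ Subgroup.closure (sgen '' {i | i < n}) :=
    mul_mem (sgen_mem_closure (by omega)) hx'B
  have h1 := wordLength_sgen_mul_of_lt hs0x' (k := 1) (by omega) (by
    rw [mul_inv_rev, inv_sgen, Nat.cast_one, one_add_one_eq_two, mul_sgen_zero_apply_one hw,
      mul_sgen_zero_apply_of_two_le le_rfl]
    omega)
  have hs1s0x' := mul_mem (sgen_mem_closure (k := 1) (by omega)) hs0x'
  have h2 := wordLength_sgen_zero_mul_of_pos (by omega) hs1s0x' (by
    rw [mul_inv_rev, mul_inv_rev, inv_sgen, inv_sgen, Equiv.Perm.mul_apply, sgen_one_apply_one,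
      mul_sgen_zero_apply_of_two_le le_rfl]
    omega)
  refine ⟨by omega, ?_⟩
  rw [mul_assoc, mul_assoc, h2, h1]

/-- Let `x ∈ W_{Dₙ}` have `t 0` as its unique left descent in `W_{Dₙ}`, and write
`x = t 0 * x'` with `ℓ_D x' = ℓ_D x - 1`.  If `s 0` is a left descent of `x'` in `W_{Bₙ}`,
then `s 1` is not a left descent of `s 0 * x'` in `W_{Bₙ}`, and consequently
`ℓ_B (s 0 * s 1 * s 0 * x') = ℓ_B (s 0 * x') + 2`. -/
theorem lift_length_of_unique_t0_descent (n : ℕ) (hn : 2 ≤ n)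
    (x x' : Equiv.Perm ℤ)
    (hx : x ∈ Subgroup.closure (tgen '' {i | i < n}))
    (hxx' : x = tgen 0 * x')
    (hlen : wordLength (tgen '' {i | i < n}) x' = wordLength (tgen '' {i | i < n}) x - 1)
    (huniq : ∀ i < n,
      (wordLength (tgen '' {i | i < n}) (tgen i * x) < wordLength (tgen '' {i | i < n}) x ↔
        i = 0))
    (hs0 : wordLength (sgen '' {i | i < n}) (sgen 0 * x') <
      wordLength (sgen '' {i | i < n}) x') :
    ¬ (wordLength (sgen '' {i | i < n}) (sgen 1 * (sgen 0 * x')) <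
        wordLength (sgen '' {i | i < n}) (sgen 0 * x')) ∧
    wordLength (sgen '' {i | i < n}) (sgen 0 * sgen 1 * sgen 0 * x') =
      wordLength (sgen '' {i | i < n}) (sgen 0 * x') + 2 :=
  lift_length_of_unique_t0_descent_general n hn x x' hx hxx' huniq hs0
end
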